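/- A pair (A,B) of 3×3 complex matrices is equivalent under GL₂(ℂ)×GL₃(ℂ)×GL₃(ℂ) to the generic representative (I₃, diag(1,−1,0)) if and only if the binary cubic det(xA+yB) ∈ ℂ[x,y] factors as c·(a₁x+b₁y)(a₂x+b₂y)(a₃x+b₃y) with c ≠ 0 and the three vectors (aᵢ,bᵢ) ∈ ℂ² pairwise linearly independent (i.e. the determinant of the pencil has three distinct roots). -/

import Mathlib

open Matrix

/-- The 3×3 complex matrix unit `E_{ij}`. -/
def Emat (i j : Fin 3) : Matrix (Fin 3) (Fin 3) ℂ := single i j 1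

/-- Two pairs of 3×3 complex matrices are equivalent under `GL₂(ℂ) × GL₃(ℂ) × GL₃(ℂ)`,
acting by `((a b; c d), P, Q) · (A, B) = (P(aA+bB)Qᵀ, P(cA+dB)Qᵀ)`. -/
def TEquiv (p q : Matrix (Fin 3) (Fin 3) ℂ × Matrix (Fin 3) (Fin 3) ℂ) : Prop :=
  ∃ (g : GL (Fin 2) ℂ) (P Q : GL (Fin 3) ℂ),
    q.1 = P.val * (g.val 0 0 • p.1 + g.val 0 1 • p.2) * Q.valᵀ ∧
    q.2 = P.val * (g.val 1 0 • p.1 + g.val 1 1 • p.2) * Q.valᵀ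

/-!
The determinant of the pencil is equivariant: acting by `(g, P, Q)` multiplies `det(xA + yB)` by
`det P · det Q` and makes the linear change of variables `g` in it. So having three pairwise
independent linear factors is an invariant of the orbit, and `(I₃, diag(1, -1, 0))` has it, its
determinant being `(x + y)(x - y)x`. Conversely, `GL₂` acts triply transitively on the points of
the projective line, so after a change of variables the three factors become `x + y`, `x - y`, `x`.
Then `A` is invertible, `(A, B)` is equivalent to `(I₃, A⁻¹B)`, and `A⁻¹B` has the three distinct
eigenvalues `1, -1, 0`, hence is conjugate to `diag(1, -1, 0)`.
-/

noncomputable section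

open MvPolynomial

section BinaryForms

variable {R : Type*} [CommRing R]

def linForm (v : Fin 2 → R) : MvPolynomial (Fin 2) R := C (v 0) * X 0 + C (v 1) * X 1

def linSubst (g : Matrix (Fin 2) (Fin 2) R) : MvPolynomial (Fin 2) R →ₐ[R] MvPolynomial (Fin 2) R :=
  aeval fun j => linForm fun i => g i j

@[simp]
theorem linSubst_linForm (g : Matrix (Fin 2) (Fin 2) R) (v : Fin 2 → R) :
    linSubst g (linForm v) = linForm (g *ᵥ v) := by
  simp only [linSubst, linForm, mulVec_fin_two, map_add, map_mul, aeval_C, aeval_X, algebraMap_eq,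
    Matrix.cons_val_zero, Matrix.cons_val_one]
  ring

@[simp]
theorem eval_linForm (x v : Fin 2 → R) : eval x (linForm v) = v ⬝ᵥ x := by
  simp [linForm, vec2_dotProduct]

theorem linForm_smul (a : R) (v : Fin 2 → R) : linForm (a • v) = C a * linForm v := by
  simp only [linForm, Pi.smul_apply, smul_eq_mul, map_mul]
  ring

theorem linSubst_C_mul_prod_linForm {ι : Type*} [Fintype ι] (g : Matrix (Fin 2) (Fin 2) R) (c : R)
    (v : ι → Fin 2 → R) :
    linSubst g (C c * ∏ i, linForm (v i)) = C c * ∏ i, linForm (g *ᵥ v i) := by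
  simp [map_prod]

theorem mulVec_cross_mulVec (g : Matrix (Fin 2) (Fin 2) R) (v w : Fin 2 → R) :
    (g *ᵥ v) 0 * (g *ᵥ w) 1 - (g *ᵥ w) 0 * (g *ᵥ v) 1 = g.det * (v 0 * w 1 - w 0 * v 1) := by
  simp only [mulVec_fin_two, det_fin_two, Matrix.cons_val_zero, Matrix.cons_val_one]
  ring

end BinaryForms

section Pencil

variable {R : Type*} [CommRing R] {n : Type*} [Fintype n]

def pencilAct (g : Matrix (Fin 2) (Fin 2) R) (P Q : Matrix n n R)
    (p : Matrix n n R × Matrix n n R) : Matrix n n R × Matrix n n R :=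
  (P * (g 0 0 • p.1 + g 0 1 • p.2) * Qᵀ, P * (g 1 0 • p.1 + g 1 1 • p.2) * Qᵀ)

theorem pencilAct_pencilAct (g h : Matrix (Fin 2) (Fin 2) R) (P P' Q Q' : Matrix n n R)
    (p : Matrix n n R × Matrix n n R) :
    pencilAct h P' Q' (pencilAct g P Q p) = pencilAct (h * g) (P' * P) (Q' * Q) p := by
  simp only [pencilAct, Matrix.mul_add, Matrix.add_mul, Matrix.mul_smul, Matrix.smul_mul,
    transpose_mul, Matrix.mul_assoc, mul_apply, Fin.sum_univ_two, add_smul, mul_smul]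
  ext1 <;> dsimp only <;> module

def pencil (p : Matrix n n R × Matrix n n R) : Matrix n n (MvPolynomial (Fin 2) R) :=
  of fun i j => C (p.1 i j) * X 0 + C (p.2 i j) * X 1

theorem pencil_pencilAct (g : Matrix (Fin 2) (Fin 2) R) (P Q : Matrix n n R)
    (p : Matrix n n R × Matrix n n R) :
    pencil (pencilAct g P Q p) = P.map C * (pencil p).map (linSubst g) * (Q.map C)ᵀ := by
  ext i j : 1
  simp only [pencil, pencilAct, linSubst, of_apply, mul_apply, map_apply, transpose_apply,
    Matrix.add_apply, Matrix.smul_apply, smul_eq_mul, map_sum, map_add, map_mul, aeval_C,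
    aeval_X, algebraMap_eq, linForm, Finset.sum_mul, ← Finset.sum_add_distrib]
  refine Finset.sum_congr rfl fun l _ => Finset.sum_congr rfl fun k _ => ?_
  ring

variable [DecidableEq n]

theorem pencilAct_one (p : Matrix n n R × Matrix n n R) : pencilAct 1 1 1 p = p := by
  simp [pencilAct]

theorem eval_det_pencil (x : Fin 2 → R) (p : Matrix n n R × Matrix n n R) :
    eval x (pencil p).det = (x 0 • p.1 + x 1 • p.2).det := by
  rw [RingHom.map_det]
  congr 1
  ext i j
  simp [pencil, mul_comm]

theorem det_pencil_pencilAct (g : Matrix (Fin 2) (Fin 2) R) (P Q : Matrix n n R)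
    (p : Matrix n n R × Matrix n n R) :
    (pencil (pencilAct g P Q p)).det = C (P.det * Q.det) * linSubst g (pencil p).det := by
  rw [pencil_pencilAct, det_mul, det_mul, det_transpose, AlgHom.map_det, map_mul,
    RingHom.map_det, RingHom.map_det]
  simp only [RingHom.mapMatrix_apply, AlgHom.mapMatrix_apply]
  ring

theorem det_pencil_one_diagonal (d : n → R) :
    (pencil (1, diagonal d)).det = ∏ i, linForm ![1, d i] := by
  rw [← det_diagonal]
  congr 1
  ext i j : 1
  rcases eq_or_ne i j with rfl | hij
  · simp [pencil, linForm]
  · simp [pencil, one_apply_ne hij, hij]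

end Pencil

section PairwiseIndependent

variable {K : Type*} [Field K] {ι : Type*}

def PairwiseIndependent (v : ι → Fin 2 → K) : Prop :=
  Pairwise fun i j => v i 0 * v j 1 ≠ v j 0 * v i 1

theorem PairwiseIndependent.mulVec {v : ι → Fin 2 → K} (hv : PairwiseIndependent v)
    {g : Matrix (Fin 2) (Fin 2) K} (hg : g.det ≠ 0) : PairwiseIndependent fun i => g *ᵥ v i :=
  fun i j hij => sub_ne_zero.mp <| by
    rw [mulVec_cross_mulVec]
    exact mul_ne_zero hg (sub_ne_zero.mpr (hv hij))

theorem PairwiseIndependent.exists_mulVec_eq_smul_std {v : Fin 3 → Fin 2 → K}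
    (hv : PairwiseIndependent v) :
    ∃ g : Matrix (Fin 2) (Fin 2) K, g.det ≠ 0 ∧ ∃ s : Fin 3 → K, (∀ i, s i ≠ 0) ∧
      ∀ i, g *ᵥ v i = s i • ![![1, 0], ![0, 1], ![1, 1]] i := by
  set d : Fin 3 → Fin 3 → K := fun i j => v i 0 * v j 1 - v j 0 * v i 1 with hd_def
  have hd {i j : Fin 3} (hij : i ≠ j) : d i j ≠ 0 := sub_ne_zero.mpr (hv hij)
  have h01 := hd (i := 0) (j := 1) (by decide)
  have h02 := hd (i := 0) (j := 2) (by decide)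
  have h21 := hd (i := 2) (j := 1) (by decide)
  -- The rows are the functionals vanishing on `v 1` and on `v 0`, scaled to agree on `v 2`.
  refine ⟨!![d 0 2 * v 1 1, -(d 0 2 * v 1 0); -(d 2 1 * v 0 1), d 2 1 * v 0 0], ?_,
    ![d 0 2 * d 0 1, d 2 1 * d 0 1, d 0 2 * d 2 1], ?_, ?_⟩
  · rw [det_fin_two_of, show d 0 2 * v 1 1 * (d 2 1 * v 0 0) - -(d 0 2 * v 1 0) * -(d 2 1 * v 0 1)
      = d 0 2 * d 2 1 * d 0 1 by simp only [hd_def]; ring]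
    exact mul_ne_zero (mul_ne_zero h02 h21) h01
  · intro i
    fin_cases i <;> simp [h01, h02, h21]
  · intro i
    fin_cases i <;> ext j <;> fin_cases j <;> simp [hd_def, vecHead, vecTail] <;> ring

theorem PairwiseIndependent.exists_mulVec_eq_smul {v w : Fin 3 → Fin 2 → K}
    (hv : PairwiseIndependent v) (hw : PairwiseIndependent w) :
    ∃ g : Matrix (Fin 2) (Fin 2) K, g.det ≠ 0 ∧ ∃ s : Fin 3 → K, (∀ i, s i ≠ 0) ∧
      ∀ i, g *ᵥ v i = s i • w i := by
  obtain ⟨g, hg, s, hs, hgv⟩ := hv.exists_mulVec_eq_smul_std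
  obtain ⟨h, hh, t, ht, hhw⟩ := hw.exists_mulVec_eq_smul_std
  have hh' : IsUnit h.det := hh.isUnit
  refine ⟨h⁻¹ * g, ?_, fun i => s i / t i, fun i => div_ne_zero (hs i) (ht i), fun i => ?_⟩
  · rw [det_mul, det_nonsing_inv, Ring.inverse_eq_inv']
    exact mul_ne_zero (inv_ne_zero hh) hg
  · have hinv : h⁻¹ *ᵥ ![![1, 0], ![0, 1], ![1, 1]] i = (t i)⁻¹ • w i := by
      rw [← inv_smul_smul₀ (ht i) (![![1, 0], ![0, 1], ![1, 1]] i), ← hhw, mulVec_smul,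
        mulVec_mulVec, nonsing_inv_mul h hh', one_mulVec]
    rw [← mulVec_mulVec, hgv, mulVec_smul, hinv, smul_smul, ← div_eq_mul_inv]

variable [Fintype ι]

variable (ι) in
def HasDistinctLinearFactors (f : MvPolynomial (Fin 2) K) : Prop :=
  ∃ (c : K) (v : ι → Fin 2 → K), c ≠ 0 ∧ f = C c * ∏ i, linForm (v i) ∧ PairwiseIndependent v

theorem HasDistinctLinearFactors.C_mul_linSubst {f : MvPolynomial (Fin 2) K}
    (hf : HasDistinctLinearFactors ι f) {k : K} (hk : k ≠ 0) {g : Matrix (Fin 2) (Fin 2) K}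
    (hg : g.det ≠ 0) : HasDistinctLinearFactors ι (C k * linSubst g f) := by
  obtain ⟨c, v, hc, rfl, hv⟩ := hf
  refine ⟨k * c, fun i => g *ᵥ v i, mul_ne_zero hk hc, ?_, hv.mulVec hg⟩
  rw [linSubst_C_mul_prod_linForm, ← mul_assoc, ← C_mul]

end PairwiseIndependent

section Diagonalization

variable {K : Type*} [Field K] {n : Type*} [Fintype n] [DecidableEq n]

theorem exists_mul_eq_mul_diagonal (M : Matrix n n K) {μ : n → K} (hμ : Function.Injective μ)
    (h : ∀ i, (M - μ i • 1).det = 0) :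
    ∃ S : Matrix n n K, S.det ≠ 0 ∧ M * S = S * diagonal μ := by
  have hvec (i : n) : ∃ v : n → K, v ≠ 0 ∧ M *ᵥ v = μ i • v := by
    obtain ⟨v, hv0, hv⟩ := exists_mulVec_eq_zero_iff.mpr (h i)
    refine ⟨v, hv0, ?_⟩
    rwa [sub_mulVec, smul_mulVec, one_mulVec, sub_eq_zero] at hv
  choose v hv0 hv using hvec
  have hind : LinearIndependent K v :=
    Module.End.eigenvectors_linearIndependent' (mulVecLin M) μ hμ v fun i =>
      ⟨Module.End.mem_eigenspace_iff.mpr (hv i), hv0 i⟩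
  refine ⟨(of v)ᵀ, ?_, ?_⟩
  · exact ((isUnit_iff_isUnit_det _).mp (linearIndependent_cols_iff_isUnit.mp hind)).ne_zero
  · ext i j
    rw [mul_diagonal, mul_apply]
    simpa [mulVec, dotProduct, mul_comm] using congrFun (hv j) i

end Diagonalization

section TEquiv

variable {p q r : Matrix (Fin 3) (Fin 3) ℂ × Matrix (Fin 3) (Fin 3) ℂ}

theorem tEquiv_iff_exists_pencilAct :
    TEquiv p q ↔ ∃ (g : GL (Fin 2) ℂ) (P Q : GL (Fin 3) ℂ), q = pencilAct g P Q p := by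
  simp only [TEquiv, pencilAct, Prod.ext_iff]

theorem tEquiv_pencilAct {g : Matrix (Fin 2) (Fin 2) ℂ} {P Q : Matrix (Fin 3) (Fin 3) ℂ}
    (hg : g.det ≠ 0) (hP : P.det ≠ 0) (hQ : Q.det ≠ 0) : TEquiv p (pencilAct g P Q p) :=
  tEquiv_iff_exists_pencilAct.mpr
    ⟨.mkOfDetNeZero g hg, .mkOfDetNeZero P hP, .mkOfDetNeZero Q hQ, rfl⟩

theorem TEquiv.symm (h : TEquiv p q) : TEquiv q p := by
  obtain ⟨g, P, Q, rfl⟩ := tEquiv_iff_exists_pencilAct.mp h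
  refine tEquiv_iff_exists_pencilAct.mpr ⟨g⁻¹, P⁻¹, Q⁻¹, ?_⟩
  rw [pencilAct_pencilAct, ← Units.val_mul, ← Units.val_mul, ← Units.val_mul, inv_mul_cancel,
    inv_mul_cancel, inv_mul_cancel, Units.val_one, Units.val_one, pencilAct_one]

theorem TEquiv.trans (hpq : TEquiv p q) (hqr : TEquiv q r) : TEquiv p r := by
  obtain ⟨g, P, Q, rfl⟩ := tEquiv_iff_exists_pencilAct.mp hpq
  obtain ⟨h, P', Q', rfl⟩ := tEquiv_iff_exists_pencilAct.mp hqr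
  rw [pencilAct_pencilAct, ← Units.val_mul, ← Units.val_mul, ← Units.val_mul]
  exact tEquiv_iff_exists_pencilAct.mpr ⟨_, _, _, rfl⟩

theorem TEquiv.hasDistinctLinearFactors {ι : Type*} [Fintype ι] (h : TEquiv p q)
    (hp : HasDistinctLinearFactors ι (pencil p).det) :
    HasDistinctLinearFactors ι (pencil q).det := by
  obtain ⟨g, P, Q, rfl⟩ := tEquiv_iff_exists_pencilAct.mp h
  rw [det_pencil_pencilAct]
  exact hp.C_mul_linSubst (mul_ne_zero P.det_ne_zero Q.det_ne_zero) g.det_ne_zero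

theorem tEquiv_one_inv_mul {A B : Matrix (Fin 3) (Fin 3) ℂ} (hA : A.det ≠ 0) :
    TEquiv (A, B) (1, A⁻¹ * B) := by
  have hA' : A⁻¹.det ≠ 0 := by simpa [det_nonsing_inv] using hA
  convert tEquiv_pencilAct (p := (A, B)) (g := 1) (Q := 1) (by simp) hA' (by simp) using 1
  simp [pencilAct, nonsing_inv_mul A hA.isUnit]

theorem tEquiv_one_diagonal_of_mul_eq_mul_diagonal {M S : Matrix (Fin 3) (Fin 3) ℂ} {μ : Fin 3 → ℂ}
    (hS : S.det ≠ 0) (h : M * S = S * diagonal μ) : TEquiv (1, M) (1, diagonal μ) := by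
  have hS' : S⁻¹.det ≠ 0 := by simpa [det_nonsing_inv] using hS
  convert tEquiv_pencilAct (p := (1, M)) (g := 1) (Q := Sᵀ) (by simp) hS' (by simpa) using 1
  simp [pencilAct, nonsing_inv_mul S hS.isUnit, Matrix.mul_assoc, h,
    nonsing_inv_mul_cancel_left _ _ hS.isUnit]

theorem tEquiv_one_diagonal_of_det_pencil {d : Fin 3 → ℂ} (hd : Function.Injective d) {c : ℂ}
    (hc : c ≠ 0) (h : (pencil p).det = C c * ∏ i, linForm ![1, d i]) :
    TEquiv p (1, diagonal d) := by
  obtain ⟨A, B⟩ := p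
  have heval (x : Fin 2 → ℂ) : (x 0 • A + x 1 • B).det = c * ∏ i, ![1, d i] ⬝ᵥ x := by
    rw [← eval_det_pencil x (A, B), h]
    simp
  have hA : A.det = c := by simpa using heval ![1, 0]
  have hroot (i : Fin 3) : (B - d i • A).det = 0 := by
    have hBA : B - d i • A = ![-d i, 1] 0 • A + ![-d i, 1] 1 • B := by simp [sub_eq_neg_add]
    rw [hBA, heval, Finset.prod_eq_zero (Finset.mem_univ i) (by simp), mul_zero]
  obtain ⟨S, hS, hMS⟩ := exists_mul_eq_mul_diagonal (A⁻¹ * B) hd fun i => by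
    rw [show A⁻¹ * B - d i • 1 = A⁻¹ * (B - d i • A) by
      rw [Matrix.mul_sub, Matrix.mul_smul, nonsing_inv_mul A (hA ▸ hc).isUnit], det_mul, hroot,
      mul_zero]
  exact (tEquiv_one_inv_mul (hA ▸ hc)).trans (tEquiv_one_diagonal_of_mul_eq_mul_diagonal hS hMS)

theorem tEquiv_one_diagonal_iff {d : Fin 3 → ℂ} (hd : Function.Injective d) :
    TEquiv p (1, diagonal d) ↔ HasDistinctLinearFactors (Fin 3) (pencil p).det := by
  have hw : PairwiseIndependent fun i => ![1, d i] := fun i j hij => by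
    simpa using (hd.ne hij).symm
  constructor
  · intro h
    refine h.symm.hasDistinctLinearFactors ⟨1, _, one_ne_zero, ?_, hw⟩
    rw [det_pencil_one_diagonal, C_1, one_mul]
  · rintro ⟨c, v, hc, hf, hv⟩
    obtain ⟨g, hg, s, hs, hgv⟩ := hv.exists_mulVec_eq_smul hw
    refine (tEquiv_pencilAct (P := 1) (Q := 1) hg (by simp) (by simp)).trans
      (tEquiv_one_diagonal_of_det_pencil hd (c := c * ∏ i, s i)
        (mul_ne_zero hc (Finset.prod_ne_zero_iff.mpr fun i _ => hs i)) ?_)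
    rw [det_pencil_pencilAct, hf, linSubst_C_mul_prod_linForm]
    simp only [hgv, linForm_smul, Finset.prod_mul_distrib, det_one, mul_one, C_1, one_mul, map_mul,
      map_prod]
    ring

end TEquiv

end

open MvPolynomial in
/-- A pair `(A, B)` of 3×3 complex matrices is `GL₂(ℂ) × GL₃(ℂ) × GL₃(ℂ)`-equivalent to the
generic representative `(I₃, diag(1,−1,0))` if and only if the binary cubic `det(xA + yB)`
factors as `c·(a₁x+b₁y)(a₂x+b₂y)(a₃x+b₃y)` with `c ≠ 0` and the three vectors `(aᵢ, bᵢ)`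
pairwise linearly independent (the determinant of the pencil has three distinct roots). -/
theorem generic_tensor_pair_iff_three_distinct_roots (A B : Matrix (Fin 3) (Fin 3) ℂ) :
    TEquiv (A, B) (1, diagonal ![1, -1, 0]) ↔
    ∃ (c : ℂ) (a b : Fin 3 → ℂ), c ≠ 0 ∧
      (Matrix.of fun i j : Fin 3 =>
          C (A i j) * X 0 + C (B i j) * X 1 : Matrix (Fin 3) (Fin 3) (MvPolynomial (Fin 2) ℂ)).det
        = C c * ∏ i : Fin 3, (C (a i) * X 0 + C (b i) * X 1) ∧
      (∀ i j : Fin 3, i ≠ j → a i * b j ≠ a j * b i) := by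
  have hd : Function.Injective ![(1 : ℂ), -1, 0] := by
    intro i j h
    fin_cases i <;> fin_cases j <;> norm_num at h <;> rfl
  rw [tEquiv_one_diagonal_iff hd]
  exact ⟨fun ⟨c, v, hc, hf, hv⟩ => ⟨c, fun i => v i 0, fun i => v i 1, hc, hf, fun _ _ => @hv _ _⟩,
    fun ⟨c, a, b, hc, hf, hab⟩ => ⟨c, fun i => ![a i, b i], hc, hf, fun _ _ => hab _ _⟩⟩
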